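/- arXiv:1405.5245 — 2 statements merged into one kernel-verified Lean document; each statement's English description precedes it below -/
import Mathlib

section
/- The TR-BDF2 method with γ = 1 − √2/2 is A-stable: its stability function R(z) satisfies |R(z)| ≤ 1 for all z with Re z ≤ 0. -/
/-!
The numerator of `R` collapses to `1 + (1 - 2γ) z`, so `|R(z)| ≤ 1` amounts to
`|1 + a z| ≤ |1 - γ z|²` with `a = 1 - 2γ`. Writing `z = x + iy` with `x ≤ 0` and
`u = (1 - γx)² ≥ 1`, the real part contributes `(1 + a x)² ≤ u²` (as `|a| ≤ 2γ`) and the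
imaginary part `a² y² ≤ 2u γ² y²`, which is where `a² ≤ 2γ²` enters; for
`γ = 1 - √2/2` this last condition holds with equality.
-/

open Complex

noncomputable def trbdf2Stability (γ : ℝ) (z : ℂ) : ℂ :=
  let γ₃ : ℝ := (1 - γ) / (2 * γ)
  ((1 - (γ₃ : ℂ)) * (1 - (γ : ℂ) * z) + (γ₃ : ℂ) * (1 + (γ : ℂ) * z)) / (1 - (γ : ℂ) * z) ^ 2

theorem trbdf2Stability_eq {γ : ℝ} (hγ : γ ≠ 0) (z : ℂ) :
    trbdf2Stability γ z = (1 + ((1 - 2 * γ : ℝ) : ℂ) * z) / (1 - (γ : ℂ) * z) ^ 2 := by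
  have hγ' : (γ : ℂ) ≠ 0 := ofReal_ne_zero.mpr hγ
  unfold trbdf2Stability
  push_cast
  field_simp
  ring

theorem norm_one_add_mul_le_norm_one_sub_mul_sq {a g : ℝ} (hg : 0 ≤ g) (ha : a ^ 2 ≤ 2 * g ^ 2)
    {z : ℂ} (hz : z.re ≤ 0) : ‖1 + (a : ℂ) * z‖ ≤ ‖1 - (g : ℂ) * z‖ ^ 2 := by
  set x := z.re
  set y := z.im
  set u := (1 - g * x) ^ 2
  have hgx : 0 ≤ -(g * x) := by nlinarith
  have hu : 1 ≤ u := by nlinarith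
  obtain ⟨ha_lower, ha_upper⟩ : -(2 * g) ≤ a ∧ a ≤ 2 * g :=
    abs_le_of_sq_le_sq' (by nlinarith) (by positivity)
  have hre : (1 + a * x) ^ 2 ≤ u ^ 2 := sq_le_sq' (by nlinarith) (by nlinarith)
  have him : (a * y) ^ 2 ≤ 2 * u * (g * y) ^ 2 := by nlinarith [sq_nonneg y]
  have hsq : ‖1 + (a : ℂ) * z‖ ^ 2 ≤ (‖1 - (g : ℂ) * z‖ ^ 2) ^ 2 := by
    simp only [Complex.sq_norm, normSq_apply, add_re, add_im, sub_re, sub_im, mul_re, mul_im,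
      one_re, one_im, ofReal_re, ofReal_im]
    nlinarith [sq_nonneg ((g * y) ^ 2)]
  exact le_of_sq_le_sq hsq (by positivity)

theorem norm_trbdf2Stability_le_one {γ : ℝ} (hγ : (1 - 2 * γ) ^ 2 ≤ 2 * γ ^ 2) {z : ℂ}
    (hz : z.re ≤ 0) : ‖trbdf2Stability γ z‖ ≤ 1 := by
  have hγpos : 0 < γ := by nlinarith
  have hden : 1 ≤ ‖1 - (γ : ℂ) * z‖ := by
    calc (1 : ℝ) ≤ 1 - γ * z.re := by nlinarith
      _ = (1 - (γ : ℂ) * z).re := by simp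
      _ ≤ ‖1 - (γ : ℂ) * z‖ := re_le_norm _
  rw [trbdf2Stability_eq hγpos.ne', norm_div, norm_pow,
    div_le_one (pow_pos (one_pos.trans_le hden) 2)]
  exact norm_one_add_mul_le_norm_one_sub_mul_sq hγpos.le hγ hz

theorem trbdf2_A_stable :
    let γ : ℝ := 1 - Real.sqrt 2 / 2
    let γ₃ : ℝ := (1 - γ) / (2*γ)
    ∀ z : ℂ, z.re ≤ 0 →
      ‖(((1 - (γ₃:ℂ)) * (1 - (γ:ℂ)*z) + (γ₃:ℂ) * (1 + (γ:ℂ)*z)) /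
        ((1 - (γ:ℂ)*z)^2))‖ ≤ 1 := by
  intro γ γ₃ z hz
  have hsqrt : Real.sqrt 2 ^ 2 = 2 := Real.sq_sqrt zero_le_two
  have hγ : (1 - 2 * γ) ^ 2 ≤ 2 * γ ^ 2 := by
    simp only [γ]
    nlinarith
  exact norm_trbdf2Stability_le_one hγ hz
end

section
/- Let R be a 3×3 real rotation matrix (R ∈ SO(3)) with R₃₃ ≠ −1. Then the 2×2 matrix Λ with entries Λ₁₁ = Λ₂₂ = (R₁₁ + R₂₂)/(1 + R₃₃) and Λ₁₂ = −Λ₂₁ = (R₁₂ − R₂₁)/(1 + R₃₃) is a 2×2 rotation matrix, i.e. Λ₁₁² + Λ₁₂² = 1. -/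
theorem so3_induced_2d_rotation (R : Matrix (Fin 3) (Fin 3) ℝ)
    (horth : R.transpose * R = 1) (hdet : R.det = 1) (h33 : R 2 2 ≠ -1) :
    ((R 0 0 + R 1 1) / (1 + R 2 2))^2 + ((R 0 1 - R 1 0) / (1 + R 2 2))^2 = 1 := by
  have hne : (1 + R 2 2) ≠ 0 := fun h => h33 (by linarith [h])
  have hadj : R.adjugate = R.transpose := by
    have h1 : R * R.adjugate = 1 := by rw [Matrix.mul_adjugate, hdet, one_smul]
    calc R.adjugate = (R.transpose * R) * R.adjugate := by rw [horth, one_mul]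
    _ = R.transpose * (R * R.adjugate) := by rw [Matrix.mul_assoc]
    _ = R.transpose := by rw [h1, mul_one]
  have hcof : R 0 0 * R 1 1 - R 0 1 * R 1 0 = R 2 2 := by
    have := congrFun (congrFun hadj 2) 2
    simp [Matrix.adjugate_fin_three, Matrix.transpose_apply] at this
    linarith
  have hrow : R * R.transpose = 1 := mul_eq_one_comm.mp horth
  have c0 := congrFun (congrFun horth 0) 0
  have c1 := congrFun (congrFun horth 1) 1
  have r2 := congrFun (congrFun hrow 2) 2
  simp [Matrix.mul_apply, Fin.sum_univ_three, Matrix.transpose_apply,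
    Matrix.one_apply] at c0 c1 r2
  have key : (R 0 0 + R 1 1)^2 + (R 0 1 - R 1 0)^2 = (1 + R 2 2)^2 := by nlinarith
  field_simp
  linarith [key]
end
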